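/- Fix reals Ξ > 1, c > -1, Z > 0, ν, and a continuous function ρ : [1,Ξ] → ℝ. Define W(X) := √(X+c)/√Z − ν + (1/2)·∫₁^Ξ ρ(T) dT /((√(X+c)+√(T+c))·√(T+c)) for X ≥ 1. Then for every X ≥ 1: ∫₁^Ξ ρ(Y)·(W(X)−W(Y))/(X−Y) dY = −(W(X)+ν)² + (X+c)/Z + (1/√Z)·∫₁^Ξ ρ(Y)/√(Y+c) dY, where the integrand (W(X)−W(Y))/(X−Y) is extended continuously to Y = X. -/

import Mathlib

open MeasureTheory

/-!
Put `u = √(X + c)` and `v = √(Y + c)`. Then `W + ν` is a function `V` of `u` alone,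
`X - Y = u² - v²`, and `V u - V v = (u - v) (1/√Z - ½ J(u, v))` for an integral `J` that is
continuous in `v`, so the difference quotient extends continuously to `Y = X`.
Integrating it against `ρ` leaves a double integral whose kernel `k(Y, T)` satisfies
`k(Y, T) + k(T, Y) = f(Y) f(T)` with `f(Y) = ρ(Y) / ((u + v) v)`; hence it equals `(∫ f)² / 2`,
and since `V u = u/√Z + ½ ∫ f` this is what produces `-(W(X) + ν)²`.
-/

open Set Function

theorem ContinuousOn.comp_projIcc {β : Type*} [TopologicalSpace β] {f : ℝ → β} {a b : ℝ}
    (hf : ContinuousOn f (Icc a b)) (h : a ≤ b) :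
    Continuous fun t => f (projIcc a b h t) :=
  hf.comp_continuous (continuous_subtype_val.comp continuous_projIcc) fun t => (projIcc a b h t).2

namespace intervalIntegral

theorem integral_integral_swap_of_continuous {k : ℝ → ℝ → ℝ} (hk : Continuous (uncurry k))
    {a b : ℝ} (hab : a ≤ b) :
    ∫ x in a..b, ∫ y in a..b, k x y = ∫ y in a..b, ∫ x in a..b, k x y := by
  simp only [integral_of_le hab]
  refine integral_integral_swap ?_
  rw [Measure.prod_restrict]
  exact (hk.continuousOn.integrableOn_compact (isCompact_Icc.prod isCompact_Icc)).mono_set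
    (prod_mono Ioc_subset_Icc_self Ioc_subset_Icc_self)

theorem integral_integral_eq_sq_div_two {k : ℝ → ℝ → ℝ} {f : ℝ → ℝ} (hk : Continuous (uncurry k))
    (hkf : ∀ x y, k x y + k y x = f x * f y) {a b : ℝ} (hab : a ≤ b) :
    ∫ x in a..b, ∫ y in a..b, k x y = (∫ x in a..b, f x) ^ 2 / 2 := by
  have hk' : Continuous (uncurry fun x y => k y x) := hk.comp continuous_swap
  have hint : ∀ {g : ℝ → ℝ → ℝ}, Continuous (uncurry g) → ∀ x,
      IntervalIntegrable (g x) volume a b := fun hg x =>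
    (hg.comp (continuous_const.prodMk continuous_id)).intervalIntegrable a b
  have hsum : ∫ x in a..b, ∫ y in a..b, (k x y + k y x) = (∫ x in a..b, f x) ^ 2 := by
    simp only [hkf, integral_const_mul, integral_mul_const, sq]
  rw [← hsum]
  have houter : ∀ {g : ℝ → ℝ → ℝ}, Continuous (uncurry g) →
      IntervalIntegrable (fun x => ∫ y in a..b, g x y) volume a b := fun hg =>
    (continuous_parametric_intervalIntegral_of_continuous' hg a b).intervalIntegrable a b
  simp only [integral_add (hint hk _) (hint hk' _)]
  rw [integral_add (houter hk) (houter hk'), integral_integral_swap_of_continuous hk' hab]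
  ring

end intervalIntegral

section Ansatz

variable (κ a b : ℝ) (s ρ : ℝ → ℝ)

noncomputable def ansatz (u : ℝ) : ℝ :=
  κ * u + (1 / 2) * ∫ t in a..b, ρ t / ((u + s t) * s t)

noncomputable def ansatzSlope (u v : ℝ) : ℝ :=
  (κ - (1 / 2) * ∫ t in a..b, ρ t / ((u + s t) * (v + s t) * s t)) / (u + v)

variable {κ a b s ρ}
variable (hs : Continuous s) (hs₀ : ∀ t, 0 < s t) (hρ : Continuous ρ)
include hs hs₀ hρ

theorem ansatz_sub {u v : ℝ} (hu : 0 ≤ u) (hv : 0 < v) :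
    ansatz κ a b s ρ u - ansatz κ a b s ρ v = (u ^ 2 - v ^ 2) * ansatzSlope κ a b s ρ u v := by
  have hpos : ∀ w, 0 ≤ w → ∀ t, 0 < w + s t := fun w hw t => add_pos_of_nonneg_of_pos hw (hs₀ t)
  have hint : ∀ w, 0 ≤ w → IntervalIntegrable (fun t => ρ t / ((w + s t) * s t)) volume a b :=
    fun w hw => (hρ.div ((continuous_const.add hs).mul hs)
      fun t => (mul_pos (hpos w hw t) (hs₀ t)).ne').intervalIntegrable a b
  have hdiff : (∫ t in a..b, ρ t / ((u + s t) * s t)) - ∫ t in a..b, ρ t / ((v + s t) * s t) =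
      (v - u) * ∫ t in a..b, ρ t / ((u + s t) * (v + s t) * s t) := by
    rw [← intervalIntegral.integral_sub (hint u hu) (hint v hv.le),
      ← intervalIntegral.integral_const_mul]
    refine intervalIntegral.integral_congr fun t _ => ?_
    have := (hpos u hu t).ne'; have := (hpos v hv.le t).ne'; have := (hs₀ t).ne'
    field_simp
    ring
  have huv : u + v ≠ 0 := (add_pos_of_nonneg_of_pos hu hv).ne'
  rw [ansatz, ansatz, ansatzSlope, show u ^ 2 - v ^ 2 = (u - v) * (u + v) by ring, mul_assoc,
    mul_div_cancel₀ _ huv]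
  linear_combination hdiff / 2

theorem continuous_ansatzSlope_comp {u : ℝ} (hu : 0 ≤ u) :
    Continuous fun y => ansatzSlope κ a b s ρ u (s y) := by
  have hpos : ∀ y t, 0 < (u + s t) * (s y + s t) * s t := fun y t =>
    mul_pos (mul_pos (add_pos_of_nonneg_of_pos hu (hs₀ t)) (add_pos (hs₀ y) (hs₀ t))) (hs₀ t)
  refine Continuous.div (continuous_const.sub (continuous_const.mul ?_))
    (continuous_const.add hs) fun y => (add_pos_of_nonneg_of_pos hu (hs₀ y)).ne'
  refine intervalIntegral.continuous_parametric_intervalIntegral_of_continuous' ?_ a b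
  exact (hρ.comp continuous_snd).div (by fun_prop) fun p => (hpos p.1 p.2).ne'

theorem integral_mul_ansatzSlope (hab : a ≤ b) {u : ℝ} (hu : 0 ≤ u) :
    ∫ y in a..b, ρ y * ansatzSlope κ a b s ρ u (s y) =
      κ * (∫ y in a..b, ρ y / s y) - ansatz κ a b s ρ u ^ 2 + κ ^ 2 * u ^ 2 := by
  have hus : ∀ t, 0 < u + s t := fun t => add_pos_of_nonneg_of_pos hu (hs₀ t)
  set f : ℝ → ℝ := fun y => ρ y / ((u + s y) * s y)
  set k : ℝ → ℝ → ℝ := fun y t => ρ y * ρ t / ((u + s y) * (u + s t) * (s y + s t) * s t)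
  have hf : Continuous f := hρ.div (by fun_prop) fun y => (mul_pos (hus y) (hs₀ y)).ne'
  have hk : Continuous (uncurry k) :=
    ((hρ.comp continuous_fst).mul (hρ.comp continuous_snd)).div (by fun_prop) fun p =>
      (mul_pos (mul_pos (mul_pos (hus p.1) (hus p.2)) (add_pos (hs₀ p.1) (hs₀ p.2)))
        (hs₀ p.2)).ne'
  -- `1 / s t + 1 / s y = (s y + s t) / (s y * s t)` cancels the factor `s y + s t`.
  have hkf : ∀ y t, k y t + k t y = f y * f t := by
    intro y t
    have := (hus y).ne'; have := (hus t).ne'; have := (hs₀ y).ne'; have := (hs₀ t).ne'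
    have := (add_pos (hs₀ y) (hs₀ t)).ne'; have := (add_pos (hs₀ t) (hs₀ y)).ne'
    simp only [k, f]
    field_simp
    ring
  have hpoint : ∀ y, ρ y * ansatzSlope κ a b s ρ u (s y) =
      κ * (ρ y / s y - u * f y) - (1 / 2) * ∫ t in a..b, k y t := by
    intro y
    have := (hus y).ne'; have := (hs₀ y).ne'
    have hinner : ρ y / (u + s y) * (∫ t in a..b, ρ t / ((u + s t) * (s y + s t) * s t)) =
        ∫ t in a..b, k y t := by
      rw [← intervalIntegral.integral_const_mul]
      refine intervalIntegral.integral_congr fun t _ => ?_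
      simp only [k]
      field_simp
    rw [ansatzSlope, ← hinner]
    simp only [f]
    field_simp
    ring
  have hρs : IntervalIntegrable (fun y => ρ y / s y) volume a b :=
    (hρ.div hs fun y => (hs₀ y).ne').intervalIntegrable a b
  have hfu : IntervalIntegrable (fun y => u * f y) volume a b :=
    (hf.intervalIntegrable a b).const_mul u
  have hkint : IntervalIntegrable (fun y => ∫ t in a..b, k y t) volume a b :=
    (intervalIntegral.continuous_parametric_intervalIntegral_of_continuous' hk a b)
      |>.intervalIntegrable a b
  simp only [hpoint]
  rw [intervalIntegral.integral_sub ((hρs.sub hfu).const_mul κ) (hkint.const_mul _),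
    intervalIntegral.integral_const_mul, intervalIntegral.integral_const_mul,
    intervalIntegral.integral_sub hρs hfu, intervalIntegral.integral_const_mul,
    intervalIntegral.integral_integral_eq_sq_div_two hk hkf hab, ansatz]
  ring

end Ansatz

theorem stmt_2 (Ξ c Z ν : ℝ) (hΞ : 1 < Ξ) (hc : -1 < c) (hZ : 0 < Z)
    (ρ : ℝ → ℝ) (hρ : ContinuousOn ρ (Set.Icc 1 Ξ))
    (W : ℝ → ℝ)
    (hW : ∀ X, W X = Real.sqrt (X + c) / Real.sqrt Z - ν +
      (1 / 2) * ∫ T in (1 : ℝ)..Ξ,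
        ρ T / ((Real.sqrt (X + c) + Real.sqrt (T + c)) * Real.sqrt (T + c))) :
    ∀ X, 1 ≤ X →
      ∃ F : ℝ → ℝ, ContinuousOn F (Set.Icc 1 Ξ) ∧
        (∀ Y ∈ Set.Icc 1 Ξ, Y ≠ X → F Y = ρ Y * (W X - W Y) / (X - Y)) ∧
        ∫ Y in (1 : ℝ)..Ξ, F Y =
          -(W X + ν) ^ 2 + (X + c) / Z +
            (1 / Real.sqrt Z) * ∫ Y in (1 : ℝ)..Ξ, ρ Y / Real.sqrt (Y + c) := by
  intro X hX
  -- Clamping to `[1, Ξ]` makes `ρ` and `√(· + c)` continuous and the latter positive on all of `ℝ`,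
  -- as the parametric-integral lemmas require; the integrals over `[1, Ξ]` do not change.
  set q : ℝ → ℝ := fun t => projIcc 1 Ξ hΞ.le t
  have hq : ∀ t ∈ Icc 1 Ξ, q t = t := fun t ht => by simp [q, projIcc_of_mem _ ht]
  set s : ℝ → ℝ := fun t => √(q t + c)
  set ρ' : ℝ → ℝ := fun t => ρ (q t)
  have hs : Continuous s := by fun_prop
  have hs₀ : ∀ t, 0 < s t := fun t => Real.sqrt_pos.2 (by linarith [(projIcc 1 Ξ hΞ.le t).2.1])
  have hρ' : Continuous ρ' := hρ.comp_projIcc hΞ.le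
  have hintegral : ∀ g : ℝ → ℝ → ℝ,
      ∫ t in (1 : ℝ)..Ξ, g (ρ' t) (s t) = ∫ t in (1 : ℝ)..Ξ, g (ρ t) √(t + c) :=
    fun g => intervalIntegral.integral_congr fun t ht => by
      rw [uIcc_of_le hΞ.le] at ht; simp only [ρ', s, hq t ht]
  have hWansatz : ∀ Y, W Y = ansatz (1 / √Z) 1 Ξ s ρ' √(Y + c) - ν := fun Y => by
    rw [hW, ansatz, hintegral fun r σ => r / ((√(Y + c) + σ) * σ)]
    ring
  refine ⟨fun Y => ρ' Y * ansatzSlope (1 / √Z) 1 Ξ s ρ' √(X + c) (s Y),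
    (hρ'.mul (continuous_ansatzSlope_comp hs hs₀ hρ' (Real.sqrt_nonneg _))).continuousOn, ?_, ?_⟩
  · intro Y hY hYX
    have hXY : X - Y ≠ 0 := sub_ne_zero.2 hYX.symm
    have hsY : s Y = √(Y + c) := by simp only [s, hq Y hY]
    have hρY : ρ' Y = ρ Y := by simp only [ρ', hq Y hY]
    dsimp only
    rw [hWansatz X, hWansatz Y, sub_sub_sub_cancel_right,
      ansatz_sub hs hs₀ hρ' (Real.sqrt_nonneg _) (Real.sqrt_pos.2 (by linarith [hY.1])),
      Real.sq_sqrt (by linarith), Real.sq_sqrt (by linarith [hY.1]), hsY, hρY]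
    field_simp
    ring
  · rw [integral_mul_ansatzSlope hs hs₀ hρ' hΞ.le (Real.sqrt_nonneg _), hWansatz,
      hintegral fun r σ => r / σ, div_pow, Real.sq_sqrt hZ.le, Real.sq_sqrt (by linarith)]
    ring
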